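/- Let s be a solution of the p-flow on [0,T) and set δ := min over θ ∈ [0,2π] of v(θ,0), which is positive. Then for every (θ,t) ∈ ℝ × [0,T), the radius of curvature satisfies 𝔯(θ,t) ≤ (Ψ(θ)·s(θ,t)^((2−2p)/(p+2)) / δ)^((p+2)/p); in particular the curvature κ = 1/𝔯 remains bounded away from zero wherever s and Ψ are bounded, so convexity of the evolving curves is preserved. -/

import Mathlib

open Real Set Filter MeasureTheory

noncomputable section

/-- Radius of curvature of the curve with support function `f`: `𝔯[f] = f'' + f`. -/
def rad (f : ℝ → ℝ) (θ : ℝ) : ℝ := iteratedDeriv 2 f θ + f θ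

/-- The time domain `[0, T)`, where `0 < T ≤ ∞` is an extended real number. -/
def timeDom (T : EReal) : Set ℝ := {t : ℝ | 0 ≤ t ∧ (t : EReal) < T}

/-- The speed `v(θ,t) = Ψ(θ) s(θ,t)^((2-2p)/(p+2)) 𝔯(θ,t)^(-p/(p+2))` of the `p`-flow. -/
def speed (p : ℝ) (Ψ : ℝ → ℝ) (s : ℝ → ℝ → ℝ) (θ t : ℝ) : ℝ :=
  Ψ θ * s θ t ^ ((2 - 2 * p) / (p + 2)) * rad (fun θ' => s θ' t) θ ^ (-p / (p + 2))

/-- `s : ℝ × [0,T) → ℝ` is a solution of the `p`-flow with weight `Ψ` on `[0, T)`,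
`0 < T ≤ ∞`: it is smooth, `π`-periodic in `θ`, positive, has positive radius of
curvature, and satisfies
`∂ₜ s = -Ψ(θ) s^((2-2p)/(p+2)) 𝔯^(-p/(p+2))`. -/
structure IsPFlow (p : ℝ) (Ψ : ℝ → ℝ) (T : EReal) (s : ℝ → ℝ → ℝ) : Prop where
  hp₁ : 1 < p
  hp₂ : p < 2
  hT : 0 < T
  hΨsmooth : ContDiff ℝ (⊤ : ℕ∞) Ψ
  hΨpos : ∀ θ, 0 < Ψ θ
  hΨper : Function.Periodic Ψ Real.pi
  hsmooth : ContDiffOn ℝ (⊤ : ℕ∞) (Function.uncurry s) (Set.univ ×ˢ timeDom T)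
  hper : ∀ t ∈ timeDom T, Function.Periodic (fun θ => s θ t) Real.pi
  hpos : ∀ θ : ℝ, ∀ t ∈ timeDom T, 0 < s θ t
  hconv : ∀ θ : ℝ, ∀ t ∈ timeDom T, 0 < rad (fun θ' => s θ' t) θ
  heq : ∀ θ : ℝ, ∀ t ∈ timeDom T,
    HasDerivWithinAt (fun τ => s θ τ) (-speed p Ψ s θ t) (timeDom T) t

/-- The area `A(t)` enclosed by the evolving curve. -/
def area (s : ℝ → ℝ → ℝ) (t : ℝ) : ℝ :=
  (1 / 2) * ∫ θ in (0:ℝ)..(2 * Real.pi), s θ t * rad (fun θ' => s θ' t) θ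

/-- The weighted `p`-affine length `Ω_p^Ψ(t)` of the evolving curve. -/
def wAffLen (p : ℝ) (Ψ : ℝ → ℝ) (s : ℝ → ℝ → ℝ) (t : ℝ) : ℝ :=
  ∫ θ in (0:ℝ)..(2 * Real.pi),
    Ψ θ * s θ t ^ ((2 - 2 * p) / (p + 2)) * rad (fun θ' => s θ' t) θ ^ ((2:ℝ) / (p + 2))

/-!
Write `v = Ψ s^α 𝔯^β` for the speed, with `α = (2-2p)/(p+2)` and `β = -p/(p+2)`, both negative.
Differentiating `∂ₜ s = -v` twice in `θ` gives `∂ₜ 𝔯 = -(∂²_θ v + v)`, hence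
`∂ₜ v = v (-α v / s - β (∂²_θ v + v) / 𝔯)`, which is positive wherever `v(·, t)` attains its
minimum, since there `∂²_θ v ≥ 0`. By a minimum principle, `v ≥ δ` persists for all time, and
`δ ≤ Ψ s^α 𝔯^β` solves to the stated bound on `𝔯`.
-/

open Topology Function
open scoped ContDiff

lemma IsLocalMin.iteratedDeriv_two_nonneg {f : ℝ → ℝ} {a : ℝ} (hmin : IsLocalMin f a)
    (hf : ContinuousAt f a) : 0 ≤ iteratedDeriv 2 f a := by
  rw [iteratedDeriv_succ, iteratedDeriv_one]
  by_contra! hneg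
  -- By the sign test `a` is then also a local maximum, so `f` is constant near `a`.
  have hmax : IsLocalMax f a := isLocalMax_of_sign_deriv hf <| nhdsWithin_le_nhds <|
    eventually_nhdsWithin_sign_eq_of_deriv_neg hneg hmin.deriv_eq_zero
  have hconst : f =ᶠ[𝓝 a] fun _ => f a := by
    filter_upwards [hmin, hmax] with x h₁ h₂ using le_antisymm h₂ h₁
  have : deriv f =ᶠ[𝓝 a] fun _ => 0 := by
    filter_upwards [hconst.deriv] with x hx
    simpa using hx
  simp [this.deriv_eq] at hneg

lemma HasDerivAt.eventually_lt_of_pos {f : ℝ → ℝ} {a L : ℝ} (hf : HasDerivAt f L a)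
    (hL : 0 < L) : ∀ᶠ x in 𝓝[<] a, f x < f a := by
  filter_upwards [(hasDerivAt_iff_tendsto_slope_left_right.mp hf).1.eventually
    (eventually_gt_nhds hL), self_mem_nhdsWithin] with x hx hxa
  exact (slope_pos_iff_gt hxa).mp hx

lemma HasDerivAt.const_mul_rpow_mul_rpow {S R : ℝ → ℝ} {S' R' c α β t : ℝ}
    (hS : HasDerivAt S S' t) (hR : HasDerivAt R R' t) (hSpos : 0 < S t) (hRpos : 0 < R t) :
    HasDerivAt (fun τ => c * S τ ^ α * R τ ^ β)
      (c * S t ^ α * R t ^ β * (α * S' / S t + β * R' / R t)) t := by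
  refine (((hS.rpow_const (Or.inl hSpos.ne')).const_mul c).mul
    (hR.rpow_const (Or.inl hRpos.ne'))).congr_deriv ?_
  rw [rpow_sub_one hSpos.ne', rpow_sub_one hRpos.ne']
  field_simp

lemma Function.Periodic.iteratedDeriv {𝕜 F : Type*} [NontriviallyNormedField 𝕜]
    [NormedAddCommGroup F] [NormedSpace 𝕜 F] {f : 𝕜 → F} {c : 𝕜} (hf : Periodic f c) (n : ℕ) :
    Periodic (iteratedDeriv n f) c := fun x => by
  simpa only [hf.funext] using
    (congrFun (iteratedDeriv_comp_add_const (n := n) (f := f) (s := c)) x).symm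

lemma Function.Periodic.isLeast_sInf_image_Icc {g : ℝ → ℝ} {c L : ℝ} (hg : Periodic g c)
    (hc : 0 < c) (hcL : c ≤ L) (hcont : Continuous g) :
    IsLeast (range g) (sInf (g '' Icc 0 L)) := by
  have hrange := hg.image_Icc hc 0
  rw [zero_add] at hrange
  have himage : g '' Icc 0 L = range g :=
    (image_subset_range _ _).antisymm (hrange ▸ image_mono (Icc_subset_Icc_right hcL))
  rw [himage]
  exact (hrange ▸ isCompact_Icc.image hcont).isLeast_sInf (range_nonempty g)

lemma rpow_le_of_le_mul_rpow_neg {p δ r A : ℝ} (hp : 0 < p) (hr : 0 < r) (hδ : 0 < δ)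
    (h : δ ≤ A * r ^ (-p / (p + 2))) : r ≤ (A / δ) ^ ((p + 2) / p) := by
  have hrq : δ * r ^ (p / (p + 2)) ≤ A := by
    rw [neg_div, rpow_neg hr.le] at h
    have := mul_le_mul_of_nonneg_right h (rpow_pos_of_pos hr (p / (p + 2))).le
    rwa [mul_assoc, inv_mul_cancel₀ (rpow_pos_of_pos hr _).ne', mul_one] at this
  calc r = (r ^ (p / (p + 2))) ^ ((p + 2) / p) := by
        rw [← rpow_mul hr.le, div_mul_div_cancel₀ (by positivity), div_self hp.ne', rpow_one]
    _ ≤ (A / δ) ^ ((p + 2) / p) := by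
        gcongr
        rwa [le_div_iff₀ hδ, mul_comm]

section Slices

variable {F : Type*} [NormedAddCommGroup F] [NormedSpace ℝ F] {f g : ℝ × ℝ → F}

lemma DifferentiableWithinAt.hasDerivAt_slice_fst {D : Set (ℝ × ℝ)} {x : ℝ × ℝ}
    (hD : ∀ θ, (θ, x.2) ∈ D) (hf : DifferentiableWithinAt ℝ f D x) :
    HasDerivAt (fun θ => f (θ, x.2)) (fderivWithin ℝ f D x (1, 0)) x.1 := by
  have hline : HasDerivWithinAt (fun θ : ℝ => (θ, x.2)) (1, 0) univ x.1 :=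
    ((hasDerivAt_id x.1).prodMk (hasDerivAt_const x.1 x.2)).hasDerivWithinAt
  rw [← hasDerivWithinAt_univ]
  exact hf.hasFDerivWithinAt.comp_hasDerivWithinAt x.1 hline fun θ _ => hD θ

lemma DifferentiableAt.hasDerivAt_slice_fst {x : ℝ × ℝ} (hf : DifferentiableAt ℝ f x) :
    HasDerivAt (fun θ => f (θ, x.2)) (fderiv ℝ f x (1, 0)) x.1 := by
  simpa using hf.differentiableWithinAt.hasDerivAt_slice_fst (D := univ) fun _ => trivial

lemma DifferentiableAt.hasDerivAt_slice_snd {x : ℝ × ℝ} (hf : DifferentiableAt ℝ f x) :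
    HasDerivAt (fun t => f (x.1, t)) (fderiv ℝ f x (0, 1)) x.2 :=
  hf.hasFDerivAt.comp_hasDerivAt x.2 ((hasDerivAt_const x.2 x.1).prodMk (hasDerivAt_id x.2))

lemma iteratedDeriv_two_eq_of_hasDerivAt {h h' : ℝ → F} {h'' : F} {θ : ℝ}
    (h₁ : ∀ θ', HasDerivAt h (h' θ') θ') (h₂ : HasDerivAt h' h'' θ) :
    iteratedDeriv 2 h θ = h'' := by
  rw [iteratedDeriv_succ, iteratedDeriv_one, funext fun θ' => (h₁ θ').deriv, h₂.deriv]

lemma ContDiffOn.iteratedDeriv_two_slice_fst {J : Set ℝ} (hJ : UniqueDiffOn ℝ J)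
    (hf : ContDiffOn ℝ ∞ f (univ ×ˢ J)) :
    ContDiffOn ℝ ∞ (fun x => iteratedDeriv 2 (fun θ => f (θ, x.2)) x.1) (univ ×ˢ J) := by
  have hU : UniqueDiffOn ℝ (univ ×ˢ J) := (uniqueDiffOn_univ (𝕜 := ℝ) (E := ℝ)).prod hJ
  have hpartial : ∀ h : ℝ × ℝ → F, ContDiffOn ℝ ∞ h (univ ×ˢ J) →
      ContDiffOn ℝ ∞ (fun y => fderivWithin ℝ h (univ ×ˢ J) y (1, 0)) (univ ×ˢ J) :=
    fun h hh => (hh.fderivWithin hU (by simp)).clm_apply contDiffOn_const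
  refine (hpartial _ (hpartial f hf)).congr fun x hx => ?_
  have hline : ∀ θ : ℝ, (θ, x.2) ∈ univ ×ˢ J := fun θ => ⟨trivial, hx.2⟩
  have hdiff : ∀ h : ℝ × ℝ → F, ContDiffOn ℝ ∞ h (univ ×ˢ J) → ∀ θ,
      DifferentiableWithinAt ℝ h (univ ×ˢ J) (θ, x.2) :=
    fun h hh θ => hh.differentiableOn (by simp) _ (hline θ)
  exact iteratedDeriv_two_eq_of_hasDerivAt
    (fun θ => (hdiff f hf θ).hasDerivAt_slice_fst (x := (θ, x.2)) hline)
    ((hdiff _ (hpartial f hf) x.1).hasDerivAt_slice_fst hline)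

lemma fderiv_fderiv_apply_comm {E : Type*} [NormedAddCommGroup E] [NormedSpace ℝ E]
    {f : E → F} {x : E} (hf : ContDiffAt ℝ 2 f x) (v w : E) :
    fderiv ℝ (fun y => fderiv ℝ f y v) x w = fderiv ℝ (fun y => fderiv ℝ f y w) x v := by
  have hd : DifferentiableAt ℝ (fderiv ℝ f) x :=
    (hf.fderiv_right (m := 1) (by norm_num)).differentiableAt one_ne_zero
  rw [fderiv_clm_apply hd (differentiableAt_const v),
    fderiv_clm_apply hd (differentiableAt_const w)]
  simpa using (hf.isSymmSndFDerivAt (by simp)) w v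


lemma hasDerivAt_iteratedDeriv_two_slice_fst {I : Set ℝ} (hI : IsOpen I)
    (hf : ContDiffOn ℝ ∞ f (univ ×ˢ I)) (hg : ContDiffOn ℝ ∞ g (univ ×ˢ I))
    (hfg : ∀ θ, ∀ t ∈ I, HasDerivAt (fun τ => f (θ, τ)) (g (θ, t)) t) {θ t : ℝ} (ht : t ∈ I) :
    HasDerivAt (fun τ => iteratedDeriv 2 (fun θ' => f (θ', τ)) θ)
      (iteratedDeriv 2 (fun θ' => g (θ', t)) θ) t := by
  have hU : IsOpen (univ ×ˢ I) := (isOpen_univ (X := ℝ)).prod hI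
  have hmem : ∀ θ' : ℝ, ∀ τ ∈ I, (θ', τ) ∈ univ ×ˢ I := fun _ _ hτ => ⟨trivial, hτ⟩
  have hsmooth : ∀ h : ℝ × ℝ → F, ContDiffOn ℝ ∞ h (univ ×ˢ I) → ∀ v : ℝ × ℝ,
      ContDiffOn ℝ ∞ (fun y => fderiv ℝ h y v) (univ ×ˢ I) :=
    fun h hh v => (hh.fderiv_of_isOpen hU (by simp)).clm_apply contDiffOn_const
  have hdiff : ∀ h : ℝ × ℝ → F, ContDiffOn ℝ ∞ h (univ ×ˢ I) → ∀ y ∈ univ ×ˢ I,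
      DifferentiableAt ℝ h y :=
    fun h hh y hy => (hh.contDiffAt (hU.mem_nhds hy)).differentiableAt (by simp)
  have hslice : ∀ h : ℝ × ℝ → F, ContDiffOn ℝ ∞ h (univ ×ˢ I) → ∀ τ ∈ I,
      iteratedDeriv 2 (fun θ' => h (θ', τ)) θ =
        fderiv ℝ (fun y => fderiv ℝ h y (1, 0)) (θ, τ) (1, 0) := fun h hh τ hτ =>
    iteratedDeriv_two_eq_of_hasDerivAt
      (fun θ' => (hdiff h hh _ (hmem θ' τ hτ)).hasDerivAt_slice_fst (x := (θ', τ)))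
      ((hdiff _ (hsmooth h hh _) _ (hmem θ τ hτ)).hasDerivAt_slice_fst (x := (θ, τ)))
  have hft : ∀ y ∈ univ ×ˢ I, fderiv ℝ f y (0, 1) = g y := fun y hy =>
    (hdiff f hf y hy).hasDerivAt_slice_snd.unique (hfg y.1 y.2 hy.2)
  have hcomm : ∀ h : ℝ × ℝ → F, ContDiffOn ℝ ∞ h (univ ×ˢ I) → ∀ y ∈ univ ×ˢ I,
      fderiv ℝ (fun z => fderiv ℝ h z (1, 0)) y (0, 1) =
        fderiv ℝ (fun z => fderiv ℝ h z (0, 1)) y (1, 0) := fun h hh y hy =>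
    fderiv_fderiv_apply_comm ((hh.contDiffAt (hU.mem_nhds hy)).of_le ENat.LEInfty.out) _ _
  have hmixed : (fun y => fderiv ℝ (fun z => fderiv ℝ f z (1, 0)) y (0, 1)) =ᶠ[𝓝 (θ, t)]
      fun y => fderiv ℝ g y (1, 0) := by
    filter_upwards [hU.mem_nhds (hmem θ t ht)] with y hy
    rw [hcomm f hf y hy, (eventuallyEq_of_mem (hU.mem_nhds hy) hft).fderiv_eq]
  have hderiv :=
    (hdiff _ (hsmooth _ (hsmooth f hf (1, 0)) (1, 0)) _ (hmem θ t ht)).hasDerivAt_slice_snd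
  rw [hcomm _ (hsmooth f hf _) _ (hmem θ t ht), hmixed.fderiv_eq, ← hslice g hg t ht] at hderiv
  refine hderiv.congr_of_eventuallyEq ?_
  filter_upwards [hI.mem_nhds ht] with τ hτ using hslice f hf τ hτ

end Slices

theorem le_of_frequently_lt_at_spatial_min {v : ℝ → ℝ → ℝ} {c b δ : ℝ} (hc : 0 < c)
    (hcont : ContinuousOn (uncurry v) (univ ×ˢ Icc 0 b))
    (hper : ∀ t ∈ Icc 0 b, Periodic (fun θ => v θ t) c) (h₀ : ∀ θ, δ ≤ v θ 0)
    (hmin : ∀ θ, ∀ t ∈ Ioc 0 b, (∀ θ', v θ t ≤ v θ' t) → ∃ᶠ τ in 𝓝[<] t, v θ τ < v θ t) :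
    ∀ θ, ∀ t ∈ Icc 0 b, δ ≤ v θ t := by
  intro θ₁ t₁ ht₁
  by_contra! hlt
  -- The first time `t₀` at which the level `m < δ` is reached gives a contradiction.
  obtain ⟨m, hm₁, hmδ⟩ := exists_between hlt
  set S := (Icc 0 c ×ˢ Icc 0 b) ∩ uncurry v ⁻¹' Iic m
  have hS : IsCompact S := (isCompact_Icc.prod isCompact_Icc).of_isClosed_subset
    ((hcont.mono (prod_mono (subset_univ _) subset_rfl)).preimage_isClosed_of_isClosed
      (isClosed_Icc.prod isClosed_Icc) isClosed_Iic) inter_subset_left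
  obtain ⟨θ₂, hθ₂, hθ₁₂⟩ := (hper t₁ ht₁).exists_mem_Ico₀ hc θ₁
  have hne : S.Nonempty :=
    ⟨(θ₂, t₁), ⟨⟨Ico_subset_Icc_self hθ₂, ht₁⟩, show v θ₂ t₁ ≤ m by linarith⟩⟩
  obtain ⟨⟨θ₀, t₀⟩, ⟨⟨-, ht₀⟩, hm₀⟩, hfirst⟩ := hS.exists_isMinOn hne continuous_snd.continuousOn
  have hbefore : ∀ θ, ∀ τ ∈ Ico 0 t₀, m < v θ τ := by
    intro θ τ hτ
    by_contra! hτm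
    have hτb : τ ∈ Icc 0 b := ⟨hτ.1, hτ.2.le.trans ht₀.2⟩
    obtain ⟨θ', hθ', hθθ'⟩ := (hper τ hτb).exists_mem_Ico₀ hc θ
    have : (θ', τ) ∈ S :=
      ⟨⟨Ico_subset_Icc_self hθ', hτb⟩, show v θ' τ ≤ m by simpa [hθθ'] using hτm⟩
    exact (hfirst this).not_gt hτ.2
  have ht₀pos : 0 < t₀ := lt_of_le_of_ne ht₀.1 fun h => by
    have : v θ₀ 0 ≤ m := h ▸ hm₀
    linarith [h₀ θ₀]
  have hat : ∀ θ, m ≤ v θ t₀ := by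
    intro θ
    have hslice : ContinuousWithinAt (fun τ => v θ τ) (Ico 0 t₀) t₀ :=
      (hcont.comp (continuous_const.prodMk continuous_id).continuousOn
        (fun τ hτ => ⟨trivial, hτ⟩) t₀ ht₀).mono
        (Ico_subset_Icc_self.trans (Icc_subset_Icc_right ht₀.2))
    rw [ContinuousWithinAt, nhdsWithin_Ico_eq_nhdsLT ht₀pos] at hslice
    exact ge_of_tendsto hslice <| mem_of_superset (Ico_mem_nhdsLT ht₀pos) fun τ hτ =>
      (hbefore θ τ hτ).le
  have hm₀' : v θ₀ t₀ = m := le_antisymm hm₀ (hat θ₀)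
  have hlater : ∀ᶠ τ in 𝓝[<] t₀, m < v θ₀ τ :=
    mem_of_superset (Ico_mem_nhdsLT ht₀pos) fun τ hτ => hbefore θ₀ τ hτ
  obtain ⟨τ, hτm, hτ⟩ :=
    (hlater.and_frequently (hmin θ₀ t₀ ⟨ht₀pos, ht₀.2⟩ fun θ' => hm₀' ▸ hat θ')).exists
  linarith

lemma Icc_subset_timeDom {T : EReal} {t : ℝ} (ht : t ∈ timeDom T) : Icc 0 t ⊆ timeDom T :=
  fun _ hτ => ⟨hτ.1, (EReal.coe_le_coe_iff.2 hτ.2).trans_lt ht.2⟩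

lemma isOpen_setOf_pos_and_lt (T : EReal) : IsOpen {t : ℝ | 0 < t ∧ (t : EReal) < T} :=
  isOpen_Ioi.inter (isOpen_Iio.preimage continuous_coe_real_ereal)

lemma setOf_pos_and_lt_subset_timeDom (T : EReal) :
    {t : ℝ | 0 < t ∧ (t : EReal) < T} ⊆ timeDom T :=
  fun _ ht => ⟨ht.1.le, ht.2⟩

lemma uniqueDiffOn_timeDom {T : EReal} (hT : 0 < T) : UniqueDiffOn ℝ (timeDom T) := by
  obtain ⟨r, h0r, hrT⟩ := EReal.lt_iff_exists_real_btwn.mp hT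
  refine uniqueDiffOn_convex (OrdConnected.convex ⟨fun x hx y hy =>
    (Icc_subset_Icc_left hx.1).trans (Icc_subset_timeDom hy)⟩) ⟨r, ?_⟩
  exact interior_mono (setOf_pos_and_lt_subset_timeDom T)
    ((isOpen_setOf_pos_and_lt T).interior_eq.symm ▸ ⟨EReal.coe_pos.1 h0r, hrT⟩)

namespace IsPFlow

variable {p : ℝ} {Ψ : ℝ → ℝ} {T : EReal} {s : ℝ → ℝ → ℝ}

lemma contDiffOn_speed (hflow : IsPFlow p Ψ T s) :
    ContDiffOn ℝ ∞ (fun x : ℝ × ℝ => speed p Ψ s x.1 x.2) (univ ×ˢ timeDom T) := by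
  have hrad : ContDiffOn ℝ ∞ (fun x : ℝ × ℝ => rad (fun θ => s θ x.2) x.1)
      (univ ×ˢ timeDom T) :=
    (hflow.hsmooth.iteratedDeriv_two_slice_fst (uniqueDiffOn_timeDom hflow.hT)).add hflow.hsmooth
  have hΨ : ContDiffOn ℝ ∞ (fun x : ℝ × ℝ => Ψ x.1) (univ ×ˢ timeDom T) :=
    (hflow.hΨsmooth.comp contDiff_fst).contDiffOn
  exact (hΨ.mul (hflow.hsmooth.rpow_const_of_ne fun x hx => (hflow.hpos x.1 x.2 hx.2).ne')).mul
    (hrad.rpow_const_of_ne fun x hx => (hflow.hconv x.1 x.2 hx.2).ne')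

lemma speed_pos (hflow : IsPFlow p Ψ T s) (θ : ℝ) {t : ℝ} (ht : t ∈ timeDom T) :
    0 < speed p Ψ s θ t :=
  mul_pos (mul_pos (hflow.hΨpos θ) (rpow_pos_of_pos (hflow.hpos θ t ht) _))
    (rpow_pos_of_pos (hflow.hconv θ t ht) _)

lemma periodic_speed (hflow : IsPFlow p Ψ T s) {t : ℝ} (ht : t ∈ timeDom T) :
    Periodic (fun θ => speed p Ψ s θ t) π := fun θ => by
  simp only [speed, rad, hflow.hΨper θ, hflow.hper t ht θ, (hflow.hper t ht).iteratedDeriv 2 θ]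

lemma eventually_speed_lt_at_spatial_min (hflow : IsPFlow p Ψ T s) {θ t : ℝ} (ht : 0 < t)
    (htT : (t : EReal) < T) (hmin : ∀ θ', speed p Ψ s θ t ≤ speed p Ψ s θ' t) :
    ∀ᶠ τ in 𝓝[<] t, speed p Ψ s θ τ < speed p Ψ s θ t := by
  set I : Set ℝ := {τ | 0 < τ ∧ (τ : EReal) < T}
  have hI : IsOpen I := isOpen_setOf_pos_and_lt T
  have htI : t ∈ I := ⟨ht, htT⟩
  have hIdom : (univ : Set ℝ) ×ˢ I ⊆ univ ×ˢ timeDom T :=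
    prod_mono subset_rfl (setOf_pos_and_lt_subset_timeDom T)
  have htdom : t ∈ timeDom T := setOf_pos_and_lt_subset_timeDom T htI
  have hv : ContDiffOn ℝ ∞ (fun x : ℝ × ℝ => speed p Ψ s x.1 x.2) (univ ×ˢ I) :=
    hflow.contDiffOn_speed.mono hIdom
  have hs : ∀ θ', ∀ τ ∈ I, HasDerivAt (fun τ => s θ' τ) (-speed p Ψ s θ' τ) τ :=
    fun θ' τ hτ => (hflow.heq θ' τ (setOf_pos_and_lt_subset_timeDom T hτ)).hasDerivAt
      (mem_of_superset (hI.mem_nhds hτ) (setOf_pos_and_lt_subset_timeDom T))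
  set q := iteratedDeriv 2 (fun θ' => speed p Ψ s θ' t) θ
  have hrad : HasDerivAt (fun τ => rad (fun θ' => s θ' τ) θ)
      (-(q + speed p Ψ s θ t)) t := by
    have h : HasDerivAt (fun τ => iteratedDeriv 2 (fun θ' => s θ' τ) θ)
        (iteratedDeriv 2 (fun θ' => -speed p Ψ s θ' t) θ) t :=
      hasDerivAt_iteratedDeriv_two_slice_fst hI (hflow.hsmooth.mono hIdom) hv.neg hs htI
    rw [iteratedDeriv_fun_neg] at h
    exact (h.add (hs θ t htI)).congr_deriv (by ring)
  have hq : 0 ≤ q := by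
    have hcont : ContinuousAt (fun θ' => speed p Ψ s θ' t) θ :=
      ContinuousAt.comp (f := fun θ' => (θ', t))
        (hv.contDiffAt ((isOpen_univ.prod hI).mem_nhds ⟨trivial, htI⟩)).continuousAt
        (continuous_id.prodMk continuous_const).continuousAt
    exact IsLocalMin.iteratedDeriv_two_nonneg (Eventually.of_forall hmin) hcont
  have hp := hflow.hp₁
  have hα : (2 - 2 * p) / (p + 2) < 0 := div_neg_of_neg_of_pos (by linarith) (by linarith)
  have hβ : -p / (p + 2) < 0 := div_neg_of_neg_of_pos (by linarith) (by linarith)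
  have hv₀ := hflow.speed_pos θ htdom
  have hs₀ := hflow.hpos θ t htdom
  have hr₀ := hflow.hconv θ t htdom
  refine ((hs θ t htI).const_mul_rpow_mul_rpow hrad hs₀ hr₀).eventually_lt_of_pos
    (mul_pos hv₀ (add_pos_of_pos_of_nonneg ?_ ?_))
  · exact div_pos (mul_pos_of_neg_of_neg hα (neg_neg_of_pos hv₀)) hs₀
  · exact div_nonneg (mul_nonneg_of_nonpos_of_nonpos hβ.le (by linarith)) hr₀.le

lemma le_speed (hflow : IsPFlow p Ψ T s) {δ : ℝ} (h₀ : ∀ θ, δ ≤ speed p Ψ s θ 0) :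
    ∀ θ, ∀ t ∈ timeDom T, δ ≤ speed p Ψ s θ t := fun θ t ht =>
  le_of_frequently_lt_at_spatial_min (v := speed p Ψ s) pi_pos
    (hflow.contDiffOn_speed.continuousOn.mono (prod_mono subset_rfl (Icc_subset_timeDom ht)))
    (fun _ hτ => hflow.periodic_speed (Icc_subset_timeDom ht hτ)) h₀
    (fun _ _ hτ hmin => (hflow.eventually_speed_lt_at_spatial_min hτ.1
      ((EReal.coe_le_coe_iff.2 hτ.2).trans_lt ht.2) hmin).frequently)
    θ t ⟨ht.1, le_rfl⟩

end IsPFlow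

/-- Along the `p`-flow, with `δ` the (positive) minimum of the initial
speed, the radius of curvature satisfies
`𝔯(θ,t) ≤ (Ψ(θ) s(θ,t)^((2-2p)/(p+2)) / δ)^((p+2)/p)`; in particular the convexity of
the evolving curves is preserved. -/
theorem rad_upper_bound (p : ℝ) (Ψ : ℝ → ℝ) (T : EReal) (s : ℝ → ℝ → ℝ)
    (hflow : IsPFlow p Ψ T s)
    (δ : ℝ) (hδ : δ = sInf ((fun θ => speed p Ψ s θ 0) '' Icc 0 (2 * π))) :
    0 < δ ∧
      ∀ θ : ℝ, ∀ t ∈ timeDom T,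
        rad (fun θ' => s θ' t) θ ≤
          (Ψ θ * s θ t ^ ((2 - 2 * p) / (p + 2)) / δ) ^ ((p + 2) / p) := by
  have h₀ : (0 : ℝ) ∈ timeDom T := ⟨le_rfl, hflow.hT⟩
  obtain ⟨⟨θ₀, hθ₀⟩, hδle⟩ := hδ ▸ (hflow.periodic_speed h₀).isLeast_sInf_image_Icc pi_pos
    (by linarith [pi_pos])
    (hflow.contDiffOn_speed.continuousOn.comp_continuous (continuous_id.prodMk continuous_const)
      fun _ => ⟨trivial, h₀⟩)
  have hδpos : 0 < δ := hθ₀ ▸ hflow.speed_pos θ₀ h₀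
  refine ⟨hδpos, fun θ t ht => ?_⟩
  exact rpow_le_of_le_mul_rpow_neg (by linarith [hflow.hp₁]) (hflow.hconv θ t ht) hδpos
    (hflow.le_speed (fun θ => hδle ⟨θ, rfl⟩) θ t ht)

end
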